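/- arXiv:math/0611873 — 2 statements merged into one kernel-verified Lean document; each statement's English description precedes it below -/
import Mathlib

section
/- Let G be a group with finite symmetric generating set X, and let k ≥ 0. If w and u are geodesic words over X (both starting at the identity) that asynchronously k-fellow travel, then w and u synchronously 2k-fellow travel, i.e. d(w(t), u(t)) ≤ 2k for all t ∈ ℕ. -/
section WordMetricPrelude

variable {G : Type*} [Group G]

/-- `w` is a word over the generating set `X`. -/
def IsWord (X : Finset G) (w : List G) : Prop := ∀ x ∈ w, x ∈ X

/-- The path traced out by the word `w`, at time `t`: the product of the first
`min t w.length` letters of `w`. -/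
def wordPath (w : List G) (t : ℕ) : G := (w.take t).prod

/-- The word metric on `G` with respect to `X`: the minimal length of a word
over `X` representing `g⁻¹ * h`. -/
noncomputable def wordDist (X : Finset G) (g h : G) : ℕ :=
  sInf {n : ℕ | ∃ w : List G, IsWord X w ∧ w.length = n ∧ w.prod = g⁻¹ * h}

/-- A word `w` over `X` is geodesic if its length equals the distance from `1`
to the element it represents. -/
def IsGeodesic (X : Finset G) (w : List G) : Prop :=
  IsWord X w ∧ w.length = wordDist X 1 w.prod

/-- Words `w` and `u` synchronously `k`-fellow travel. -/
def SyncFellowTravel (X : Finset G) (k : ℕ) (w u : List G) : Prop :=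
  ∀ t : ℕ, wordDist X (wordPath w t) (wordPath u t) ≤ k

/-- Words `w` and `u` asynchronously `k`-fellow travel: there is a nondecreasing
unbounded reparameterization `φ` with `d(w(t), u(φ t)) ≤ k` for all `t`. -/
def AsyncFellowTravel (X : Finset G) (k : ℕ) (w u : List G) : Prop :=
  ∃ φ : ℕ → ℕ, Monotone φ ∧ (∀ N : ℕ, ∃ t : ℕ, N ≤ φ t) ∧
    ∀ t : ℕ, wordDist X (wordPath w t) (wordPath u (φ t)) ≤ k

/-- `(G, X)` has the synchronous falsification by fellow traveler property with
constant `k`. -/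
def SyncFFTP (X : Finset G) (k : ℕ) : Prop :=
  ∀ w : List G, IsWord X w → ¬ IsGeodesic X w →
    ∃ u : List G, IsWord X u ∧ u.prod = w.prod ∧ u.length < w.length ∧
      SyncFellowTravel X k u w

/-- `(G, X)` has the asynchronous falsification by fellow traveler property with
constant `k`. -/
def AsyncFFTP (X : Finset G) (k : ℕ) : Prop :=
  ∀ w : List G, IsWord X w → ¬ IsGeodesic X w →
    ∃ u : List G, IsWord X u ∧ u.prod = w.prod ∧ u.length < w.length ∧
      AsyncFellowTravel X k u w

end WordMetricPrelude

section Aux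
variable {G : Type*} [Group G]

lemma exists_word_rep (X : Finset G) (hXsym : ∀ x ∈ X, x⁻¹ ∈ X)
    (hXgen : Subgroup.closure (X : Set G) = ⊤) (g : G) :
    ∃ l : List G, IsWord X l ∧ l.prod = g := by
  have hg : g ∈ Subgroup.closure (X : Set G) := by rw [hXgen]; trivial
  induction hg using Subgroup.closure_induction with
  | mem x hx => exact ⟨[x], by simpa [IsWord] using hx, by simp⟩
  | one => exact ⟨[], by simp [IsWord], by simp⟩
  | mul x y _ _ ihx ihy =>
      obtain ⟨l₁, h₁, rfl⟩ := ihx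
      obtain ⟨l₂, h₂, rfl⟩ := ihy
      refine ⟨l₁ ++ l₂, ?_, by simp⟩
      intro x hx
      rcases List.mem_append.mp hx with h|h
      exacts [h₁ x h, h₂ x h]
  | inv x _ ihx =>
      obtain ⟨l, h₁, rfl⟩ := ihx
      refine ⟨(l.map fun x => x⁻¹).reverse, ?_, (List.prod_inv_reverse l).symm⟩
      intro x hx
      simp only [List.mem_reverse, List.mem_map] at hx
      obtain ⟨y, hy, rfl⟩ := hx
      exact hXsym y (h₁ y hy)

lemma wordDist_le (X : Finset G) {g h : G} {v : List G} (hv : IsWord X v)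
    (hprod : v.prod = g⁻¹ * h) : wordDist X g h ≤ v.length :=
  Nat.sInf_le ⟨v, hv, rfl, hprod⟩

lemma exists_word_dist (X : Finset G) (hXsym : ∀ x ∈ X, x⁻¹ ∈ X)
    (hXgen : Subgroup.closure (X : Set G) = ⊤) (g h : G) :
    ∃ v : List G, IsWord X v ∧ v.length = wordDist X g h ∧ v.prod = g⁻¹ * h := by
  obtain ⟨l, hl, hp⟩ := exists_word_rep X hXsym hXgen (g⁻¹ * h)
  have hne : {n : ℕ | ∃ w : List G, IsWord X w ∧ w.length = n ∧ w.prod = g⁻¹ * h}.Nonempty :=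
    ⟨l.length, l, hl, rfl, hp⟩
  obtain ⟨v, hv, hlen, hprod⟩ := Nat.sInf_mem hne
  exact ⟨v, hv, hlen, hprod⟩

lemma wordDist_symm (X : Finset G) (hXsym : ∀ x ∈ X, x⁻¹ ∈ X)
    (hXgen : Subgroup.closure (X : Set G) = ⊤) (g h : G) :
    wordDist X g h = wordDist X h g := by
  have key : ∀ a b : G, wordDist X b a ≤ wordDist X a b := by
    intro a b
    obtain ⟨v, hv, hlen, hprod⟩ := exists_word_dist X hXsym hXgen a b
    have : ((v.map fun x => x⁻¹).reverse).prod = b⁻¹ * a := by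
      rw [← List.prod_inv_reverse, hprod]; group
    have hle := wordDist_le X (g := b) (h := a) ?_ this
    · simpa [hlen] using hle
    · intro x hx
      simp only [List.mem_reverse, List.mem_map] at hx
      obtain ⟨y, hy, rfl⟩ := hx
      exact hXsym y (hv y hy)
  exact le_antisymm (key h g) (key g h)

lemma wordDist_triangle (X : Finset G) (hXsym : ∀ x ∈ X, x⁻¹ ∈ X)
    (hXgen : Subgroup.closure (X : Set G) = ⊤) (g h j : G) :
    wordDist X g j ≤ wordDist X g h + wordDist X h j := by
  obtain ⟨v₁, hv₁, hl₁, hp₁⟩ := exists_word_dist X hXsym hXgen g h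
  obtain ⟨v₂, hv₂, hl₂, hp₂⟩ := exists_word_dist X hXsym hXgen h j
  have hword : IsWord X (v₁ ++ v₂) := by
    intro x hx
    rcases List.mem_append.mp hx with hh|hh
    exacts [hv₁ x hh, hv₂ x hh]
  have hprod : (v₁ ++ v₂).prod = g⁻¹ * j := by
    rw [List.prod_append, hp₁, hp₂]; group
  have := wordDist_le X hword hprod
  simpa [hl₁, hl₂] using this

/-- distance from 1 to a point on a geodesic. -/
lemma dist_one_wordPath (X : Finset G) (hXsym : ∀ x ∈ X, x⁻¹ ∈ X)
    (hXgen : Subgroup.closure (X : Set G) = ⊤) {u : List G} (hu : IsGeodesic X u) (t : ℕ) :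
    wordDist X 1 (wordPath u t) = min t u.length := by
  apply le_antisymm
  · have hword : IsWord X (u.take t) := fun x hx => hu.1 x (List.mem_of_mem_take hx)
    have := wordDist_le X (g := 1) (h := wordPath u t) hword (by simp [wordPath])
    simpa using this
  · have h1 : wordDist X 1 u.prod = u.length := hu.2.symm
    have h2 : wordDist X (wordPath u t) u.prod ≤ u.length - t := by
      have hword : IsWord X (u.drop t) := fun x hx => hu.1 x (List.mem_of_mem_drop hx)
      have hprod : (u.drop t).prod = (wordPath u t)⁻¹ * u.prod := by
        rw [wordPath, eq_inv_mul_iff_mul_eq, ← List.prod_append, List.take_append_drop]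
      have := wordDist_le X hword hprod
      simpa using this
    have h3 := wordDist_triangle X hXsym hXgen 1 (wordPath u t) u.prod
    omega

/-- distance along a word path. -/
lemma wordDist_wordPath_le {X : Finset G} {u : List G} (hu : IsWord X u) {s t : ℕ} (hst : s ≤ t) :
    wordDist X (wordPath u s) (wordPath u t) ≤ min t u.length - min s u.length := by
  have hword : IsWord X ((u.take t).drop s) :=
    fun x hx => hu x (List.mem_of_mem_take (List.mem_of_mem_drop hx))
  have hprod : ((u.take t).drop s).prod = (wordPath u s)⁻¹ * wordPath u t := by
    rw [wordPath, wordPath, eq_inv_mul_iff_mul_eq]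
    have : u.take s = (u.take t).take s := by rw [List.take_take, min_eq_left hst]
    rw [this, ← List.prod_append, List.take_append_drop]
  have := wordDist_le X hword hprod
  simp only [List.length_drop, List.length_take] at this
  omega

end Aux


/-- If `w` and `u` are geodesic words over `X` that
asynchronously `k`-fellow travel, then they synchronously `2k`-fellow travel. -/
theorem geodesic_async_to_sync_fellow_travel {G : Type*} [Group G]
    (X : Finset G) (hXsym : ∀ x ∈ X, x⁻¹ ∈ X)
    (hXgen : Subgroup.closure (X : Set G) = ⊤)
    (k : ℕ) (w u : List G)
    (hw : IsGeodesic X w) (hu : IsGeodesic X u)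
    (hft : AsyncFellowTravel X k w u) :
    SyncFellowTravel X (2 * k) w u := by
  obtain ⟨φ, hmono, hunb, hft⟩ := hft
  have tri := wordDist_triangle X hXsym hXgen
  have symm := wordDist_symm X hXsym hXgen
  -- distance between endpoints
  have hend : wordDist X w.prod u.prod ≤ k := by
    obtain ⟨t₀, ht₀⟩ := hunb u.length
    have h := hft (max t₀ w.length)
    have hw' : wordPath w (max t₀ w.length) = w.prod := by
      simp [wordPath, List.take_of_length_le (le_max_right t₀ w.length)]
    have hu' : wordPath u (φ (max t₀ w.length)) = u.prod := by
      have : u.length ≤ φ (max t₀ w.length) := le_trans ht₀ (hmono (le_max_left _ _))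
      simp [wordPath, List.take_of_length_le this]
    rwa [hw', hu'] at h
  -- length comparison
  have hlen : u.length ≤ w.length + k := by
    have h1 := tri 1 w.prod u.prod
    rw [← hw.2, ← hu.2] at h1
    omega
  intro t
  by_cases hcase : t ≤ w.length
  · -- go through u (φ t)
    have hA := hft t
    have hwt : wordDist X 1 (wordPath w t) = t := by
      rw [dist_one_wordPath X hXsym hXgen hw t, min_eq_left hcase]
    have hut : wordDist X 1 (wordPath u (φ t)) = min (φ t) u.length :=
      dist_one_wordPath X hXsym hXgen hu (φ t)
    set a := min (φ t) u.length with ha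
    have h1 : t ≤ a + k := by
      have := tri 1 (wordPath u (φ t)) (wordPath w t)
      rw [hut, symm (wordPath u (φ t)) (wordPath w t)] at this
      omega
    have h2 : a ≤ t + k := by
      have := tri 1 (wordPath w t) (wordPath u (φ t))
      rw [hwt] at this
      omega
    have hD : wordDist X (wordPath u (φ t)) (wordPath u t) ≤ k := by
      rcases le_total (φ t) t with hle | hle
      · have := wordDist_wordPath_le hu.1 hle
        omega
      · have := wordDist_wordPath_le hu.1 (u := u) hle
        rw [symm (wordPath u (φ t)) (wordPath u t)]
        omega
    have := tri (wordPath w t) (wordPath u (φ t)) (wordPath u t)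
    omega
  · -- t > |w| : go through u.prod
    have hwt : wordPath w t = w.prod := by
      simp [wordPath, List.take_of_length_le (le_of_lt (not_le.mp hcase))]
    have hD : wordDist X u.prod (wordPath u t) ≤ k := by
      have hup : u.prod = wordPath u u.length := by simp [wordPath]
      rcases le_total u.length t with hle | hle
      · have := wordDist_wordPath_le hu.1 (u := u) hle
        rw [← hup] at this
        omega
      · have := wordDist_wordPath_le hu.1 (u := u) hle
        rw [← hup, symm (wordPath u t) u.prod] at this
        omega
    have := tri (wordPath w t) u.prod (wordPath u t)
    rw [hwt] at this ⊢
    omega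
end

section
/- Let G be a group with finite symmetric generating set X. If (G,X) has the falsification by fellow traveler property with constant k, then for every i ∈ ℕ there exists a constant C(i) (depending only on k and i) such that (G,X) is almost convex(i) with constant C(i): for every n ∈ ℕ and all g, g' ∈ G with d(1,g) = d(1,g') = n and d(g,g') ≤ i, there is an edge path from g to g' of length at most C(i) all of whose vertices lie in the ball B(n) = {h ∈ G : d(1,h) ≤ n}. -/
/-! Let `w` be a geodesic word for `g` and `a` one from `g` to `g'`, so `w ++ a` represents `g'`
with at most `i` letters to spare. Falsifying it repeatedly gives a geodesic `u` for `g'`, and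
since each falsification moves the path by at most `k`, `u` stays within `k * i` of `w ++ a`,
which follows `w` up to time `n`. Going back along `w` from time `n` to `t = n - k * i`, across
to `u(t)`, and forward along `u` gives a path of length at most `3 * k * i`; it stays in `B(n)`
because the path of a word is in `B(t)` at time `t`. -/

section WordMetric

variable {G : Type*} {X : Finset G}

theorem IsWord.take {w : List G} (hw : IsWord X w) (t : ℕ) : IsWord X (w.take t) :=
  fun x hx => hw x (List.mem_of_mem_take hx)

theorem IsWord.drop {w : List G} (hw : IsWord X w) (t : ℕ) : IsWord X (w.drop t) :=
  fun x hx => hw x (List.mem_of_mem_drop hx)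

theorem IsWord.append {w u : List G} (hw : IsWord X w) (hu : IsWord X u) :
    IsWord X (w ++ u) := by
  intro x hx
  rcases List.mem_append.1 hx with h | h
  exacts [hw x h, hu x h]

variable [Group G]

theorem IsWord.inv_reverse (hsym : ∀ x ∈ X, x⁻¹ ∈ X) {w : List G} (hw : IsWord X w) :
    IsWord X (w.map (·⁻¹)).reverse := by
  intro x hx
  obtain ⟨y, hy, rfl⟩ := List.mem_map.1 (List.mem_reverse.1 hx)
  exact hsym y (hw y hy)

theorem wordPath_zero (w : List G) : wordPath w 0 = 1 := rfl

theorem wordPath_length (w : List G) : wordPath w w.length = w.prod := by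
  rw [wordPath, List.take_length]

theorem wordPath_add (w : List G) (s j : ℕ) :
    wordPath w (s + j) = wordPath w s * wordPath (w.drop s) j := by
  rw [wordPath, List.take_add, List.prod_append]
  rfl

theorem wordDist_le_length {g h : G} {w : List G} (hw : IsWord X w) (hp : w.prod = g⁻¹ * h) :
    wordDist X g h ≤ w.length :=
  Nat.sInf_le ⟨w, hw, rfl, hp⟩

theorem wordDist_self (g : G) : wordDist X g g = 0 :=
  Nat.le_zero.1 <| wordDist_le_length (w := []) (fun _ hx => absurd hx List.not_mem_nil) (by simp)

theorem wordDist_mul_left (a g h : G) : wordDist X (a * g) (a * h) = wordDist X g h := by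
  rw [wordDist, wordDist, mul_inv_rev, mul_assoc, inv_mul_cancel_left]

theorem wordDist_comm (hsym : ∀ x ∈ X, x⁻¹ ∈ X) (g h : G) : wordDist X g h = wordDist X h g := by
  unfold wordDist
  congr 1
  ext n
  constructor <;> rintro ⟨w, hw, rfl, hp⟩ <;>
    exact ⟨_, hw.inv_reverse hsym, by simp, by rw [← List.prod_inv_reverse, hp]; group⟩

theorem wordDist_wordPath_add_le {w : List G} (hw : IsWord X w) (s j : ℕ) :
    wordDist X (wordPath w s) (wordPath w (s + j)) ≤ j :=
  (wordDist_le_length ((hw.drop s).take j) (by rw [wordPath_add, inv_mul_cancel_left]; rfl)).trans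
    (List.length_take_le _ _)

theorem wordDist_one_wordPath_le {w : List G} (hw : IsWord X w) (t : ℕ) :
    wordDist X 1 (wordPath w t) ≤ t := by
  have := wordDist_wordPath_add_le hw 0 t
  rwa [wordPath_zero, zero_add] at this

theorem exists_isWord_prod_eq (hsym : ∀ x ∈ X, x⁻¹ ∈ X)
    (hgen : Subgroup.closure (X : Set G) = ⊤) (g : G) : ∃ w : List G, IsWord X w ∧ w.prod = g := by
  have hg : g ∈ Submonoid.closure ((X : Set G) ∪ (X : Set G)⁻¹) := by
    rw [← Subgroup.closure_toSubmonoid, hgen]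
    trivial
  obtain ⟨w, hw, rfl⟩ := Submonoid.exists_list_of_mem_closure hg
  exact ⟨w, fun y hy => (hw y hy).elim id fun hy' => by simpa using hsym _ hy', rfl⟩

theorem exists_isWord_length_eq_wordDist (hsym : ∀ x ∈ X, x⁻¹ ∈ X)
    (hgen : Subgroup.closure (X : Set G) = ⊤) (g h : G) :
    ∃ w : List G, IsWord X w ∧ w.length = wordDist X g h ∧ w.prod = g⁻¹ * h := by
  obtain ⟨w, hw, hp⟩ := exists_isWord_prod_eq hsym hgen (g⁻¹ * h)
  exact Nat.sInf_mem (s := {n | ∃ w : List G, IsWord X w ∧ w.length = n ∧ w.prod = g⁻¹ * h})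
    ⟨w.length, w, hw, rfl, hp⟩

theorem wordDist_triangle_s3 (hsym : ∀ x ∈ X, x⁻¹ ∈ X) (hgen : Subgroup.closure (X : Set G) = ⊤)
    (a b c : G) : wordDist X a c ≤ wordDist X a b + wordDist X b c := by
  obtain ⟨u, hu, hul, hup⟩ := exists_isWord_length_eq_wordDist hsym hgen a b
  obtain ⟨v, hv, hvl, hvp⟩ := exists_isWord_length_eq_wordDist hsym hgen b c
  refine (wordDist_le_length (hu.append hv) ?_).trans (by simp [hul, hvl])
  rw [List.prod_append, hup, hvp]
  group

theorem IsGeodesic.length_le {u w : List G} (hu : IsGeodesic X u) (hw : IsWord X w)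
    (h : u.prod = w.prod) : u.length ≤ w.length :=
  hu.2 ▸ wordDist_le_length hw (by rw [h, inv_one, one_mul])

end WordMetric

section JoinedInBall

variable {G : Type*} [Group G] {X : Finset G}

/-- `g` and `g'` are joined by an edge path of length at most `C` inside the ball `B(n)`. -/
def JoinedInBall (X : Finset G) (n C : ℕ) (g g' : G) : Prop :=
  ∃ (m : ℕ) (p : ℕ → G), m ≤ C ∧ p 0 = g ∧ p m = g' ∧
    (∀ j < m, wordDist X (p j) (p (j + 1)) ≤ 1) ∧ ∀ j ≤ m, wordDist X 1 (p j) ≤ n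

theorem JoinedInBall.mono {n C C' : ℕ} {g g' : G} (h : JoinedInBall X n C g g') (hC : C ≤ C') :
    JoinedInBall X n C' g g' :=
  let ⟨m, p, hm, hrest⟩ := h
  ⟨m, p, hm.trans hC, hrest⟩

theorem JoinedInBall.symm (hsym : ∀ x ∈ X, x⁻¹ ∈ X) {n C : ℕ} {g g' : G}
    (h : JoinedInBall X n C g g') : JoinedInBall X n C g' g := by
  obtain ⟨m, p, hm, hp0, hpm, hstep, hball⟩ := h
  refine ⟨m, fun j => p (m - j), hm, by simpa using hpm, by simpa using hp0, fun j hj => ?_,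
    fun j _ => hball _ (Nat.sub_le m j)⟩
  dsimp only
  rw [wordDist_comm hsym, show m - j = m - (j + 1) + 1 by omega]
  exact hstep _ (by omega)

theorem JoinedInBall.trans {n C₁ C₂ : ℕ} {g h g' : G} (h₁ : JoinedInBall X n C₁ g h)
    (h₂ : JoinedInBall X n C₂ h g') : JoinedInBall X n (C₁ + C₂) g g' := by
  obtain ⟨m₁, p, hm₁, hp0, hpm, hpstep, hpball⟩ := h₁
  obtain ⟨m₂, q, hm₂, hq0, hqm, hqstep, hqball⟩ := h₂
  refine ⟨m₁ + m₂, fun j => if j ≤ m₁ then p j else q (j - m₁), by omega, by simpa using hp0,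
    ?_, fun j hj => ?_, fun j hj => ?_⟩
  · rcases Nat.eq_zero_or_pos m₂ with rfl | hm₂
    · simp [hpm, ← hqm, hq0]
    · simp [show ¬m₁ + m₂ ≤ m₁ by omega, hqm]
  · rcases lt_trichotomy j m₁ with hj₁ | rfl | hj₁
    · simpa [hj₁.le, Nat.succ_le_of_lt hj₁] using hpstep j hj₁
    · simpa [hpm, hq0] using hqstep 0 (by omega)
    · simpa [hj₁.not_ge, show ¬j + 1 ≤ m₁ by omega, show j + 1 - m₁ = j - m₁ + 1 by omega]
        using hqstep (j - m₁) (by omega)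
  · dsimp only
    split_ifs with hj₁
    exacts [hpball j hj₁, hqball _ (by omega)]

theorem joinedInBall_mul_prod (hsym : ∀ x ∈ X, x⁻¹ ∈ X)
    (hgen : Subgroup.closure (X : Set G) = ⊤) {n : ℕ} {w : List G} (hw : IsWord X w) {h : G}
    (hn : wordDist X 1 h + w.length ≤ n) : JoinedInBall X n w.length h (h * w.prod) := by
  refine ⟨w.length, fun j => h * wordPath w j, le_rfl, mul_one h, congrArg (h * ·) (wordPath_length w),
    fun j _ => ?_, fun j hj => ?_⟩
  · rw [wordDist_mul_left]
    exact wordDist_wordPath_add_le hw j 1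
  · calc wordDist X 1 (h * wordPath w j)
        ≤ wordDist X 1 h + wordDist X h (h * wordPath w j) := wordDist_triangle_s3 hsym hgen _ _ _
      _ = wordDist X 1 h + wordDist X 1 (wordPath w j) := by
          simpa using wordDist_mul_left (X := X) h 1 (wordPath w j)
      _ ≤ n := by have := wordDist_one_wordPath_le hw j; omega

end JoinedInBall

section AlmostConvexity

variable {G : Type*} [Group G] {X : Finset G}

theorem joinedInBall_wordPath_prod (hsym : ∀ x ∈ X, x⁻¹ ∈ X)
    (hgen : Subgroup.closure (X : Set G) = ⊤) {n t : ℕ} {w : List G} (hw : IsWord X w)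
    (ht : t ≤ w.length) (hn : w.length ≤ n) :
    JoinedInBall X n (w.length - t) (wordPath w t) w.prod := by
  have hnorm := wordDist_one_wordPath_le hw t
  have h := joinedInBall_mul_prod hsym hgen (hw.drop t) (h := wordPath w t) (n := n)
    (by rw [List.length_drop]; omega)
  rwa [List.length_drop, wordPath, List.prod_take_mul_prod_drop] at h

theorem joinedInBall_of_wordDist_wordPath_le (hsym : ∀ x ∈ X, x⁻¹ ∈ X)
    (hgen : Subgroup.closure (X : Set G) = ⊤) {n t : ℕ} {w u : List G} (hw : IsWord X w)
    (hu : IsWord X u) (hwn : w.length = n) (hun : u.length = n)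
    (ht : t + wordDist X (wordPath w t) (wordPath u t) ≤ n) :
    JoinedInBall X n (2 * (n - t) + wordDist X (wordPath w t) (wordPath u t)) w.prod u.prod := by
  obtain ⟨b, hb, hbl, hbp⟩ :=
    exists_isWord_length_eq_wordDist hsym hgen (wordPath w t) (wordPath u t)
  have hback := (joinedInBall_wordPath_prod hsym hgen hw (t := t) (by omega) hwn.le).symm hsym
  have hacross := joinedInBall_mul_prod hsym hgen hb (h := wordPath w t) (n := n)
    (by have := wordDist_one_wordPath_le hw t; omega)
  rw [hbp, mul_inv_cancel_left] at hacross
  have hforth := joinedInBall_wordPath_prod hsym hgen hu (t := t) (by omega) hun.le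
  exact ((hback.trans hacross).trans hforth).mono (by omega)

theorem SyncFFTP.exists_geodesic_syncFellowTravel (hsym : ∀ x ∈ X, x⁻¹ ∈ X)
    (hgen : Subgroup.closure (X : Set G) = ⊤) {k : ℕ} (hF : SyncFFTP X k) {w : List G}
    (hw : IsWord X w) :
    ∃ u : List G, IsGeodesic X u ∧ u.prod = w.prod ∧
      SyncFellowTravel X (k * (w.length - u.length)) u w := by
  induction hN : w.length using Nat.strong_induction_on generalizing w with
  | _ N ih =>
  by_cases hgeo : IsGeodesic X w
  · exact ⟨w, hgeo, rfl, fun t => by simp [wordDist_self]⟩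
  obtain ⟨v, hv, hvw, hvN, hvw_ft⟩ := hF w hw hgeo
  obtain ⟨u, hu, huv, huv_ft⟩ := ih _ (hN ▸ hvN) hv rfl
  have huv_len := hu.length_le hv huv
  refine ⟨u, hu, huv.trans hvw, fun t => ?_⟩
  calc wordDist X (wordPath u t) (wordPath w t)
      ≤ wordDist X (wordPath u t) (wordPath v t) + wordDist X (wordPath v t) (wordPath w t) :=
        wordDist_triangle_s3 hsym hgen _ _ _
    _ ≤ k * (v.length - u.length) + k := add_le_add (huv_ft t) (hvw_ft t)
    _ = k * (v.length - u.length + 1) := by ring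
    _ ≤ k * (N - u.length) := Nat.mul_le_mul_left k (by omega)

end AlmostConvexity

/-- If `(G,X)` has the falsification by fellow traveler
property with constant `k`, then for every `i` there is a constant `C`
(depending only on `k` and `i`) such that `(G,X)` is almost convex(`i`)
with constant `C`. -/
theorem fftp_implies_almost_convex_all :
    ∀ k i : ℕ, ∃ C : ℕ,
      ∀ (G : Type) [Group G] (X : Finset G),
        (∀ x ∈ X, x⁻¹ ∈ X) → Subgroup.closure (X : Set G) = ⊤ →
        SyncFFTP X k →
        ∀ (n : ℕ) (g g' : G), wordDist X 1 g = n → wordDist X 1 g' = n →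
          wordDist X g g' ≤ i →
          ∃ (m : ℕ) (p : ℕ → G), m ≤ C ∧ p 0 = g ∧ p m = g' ∧
            (∀ j < m, wordDist X (p j) (p (j + 1)) ≤ 1) ∧
            (∀ j ≤ m, wordDist X 1 (p j) ≤ n) := by
  intro k i
  refine ⟨3 * (k * i), fun G _ X hsym hgen hF n g g' hg hg' hgg' => ?_⟩
  obtain ⟨w, hw, hwn, hwg⟩ := exists_isWord_length_eq_wordDist hsym hgen 1 g
  obtain ⟨a, ha, hai, hag⟩ := exists_isWord_length_eq_wordDist hsym hgen g g'
  rw [inv_one, one_mul] at hwg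
  have hwag : (w ++ a).prod = g' := by rw [List.prod_append, hwg, hag, mul_inv_cancel_left]
  obtain ⟨u, hu, hug, hft⟩ := hF.exists_geodesic_syncFellowTravel hsym hgen (hw.append ha)
  have hun : u.length = n := by rw [hu.2, hug, hwag, hg']
  set t := n - k * i
  have hwat : wordPath (w ++ a) t = wordPath w t := by
    rw [wordPath, wordPath, List.take_append_of_le_length (by omega)]
  have hclose : wordDist X (wordPath w t) (wordPath u t) ≤ k * i := by
    rw [wordDist_comm hsym, ← hwat]
    exact (hft t).trans (Nat.mul_le_mul_left k (by simp only [List.length_append]; omega))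
  have ht : t + wordDist X (wordPath w t) (wordPath u t) ≤ n := by
    rcases Nat.eq_zero_or_pos t with ht0 | _
    · rw [ht0, wordPath_zero, wordPath_zero, wordDist_self]
      exact Nat.zero_le n
    · omega
  have hjoin := (joinedInBall_of_wordDist_wordPath_le hsym hgen hw hu.1 (by omega) hun ht).mono
    (show _ ≤ 3 * (k * i) by omega)
  rwa [hwg, hug, hwag] at hjoin
end
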